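/- arXiv:2407.03344 — 4 statements merged into one kernel-verified Lean document; each statement's English description precedes it below -/
import Mathlib

section
/- Let μ be a nonnegative Borel measure on [0,∞) with μ((0,∞)) > 0 and all moments μ_m = ∫_0^∞ t^m dμ(t) finite, and let φ_m(z) = (1/μ_m) ∫_0^∞ t^m/(t+z) dμ(t) for z > 0. Fix z > 0 and suppose the moment-ratio sequence μ_m/μ_{m+1} converges to a limit ρ₀ as m → ∞ and that the sequence φ_m(z) converges to a limit L as m → ∞. Then ρ₀ ≥ 0 and L = ρ₀/(1 + z ρ₀). -/
open MeasureTheory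

/-- The `m`-th moment of the measure `μ`: `μ_m = ∫_0^∞ t^m dμ(t)`. -/
noncomputable def moment (μ : Measure ℝ) (m : ℕ) : ℝ := ∫ t, t ^ m ∂μ

/-- The converging factor `φ_m(z) = (1/μ_m) ∫_0^∞ t^m/(t+z) dμ(t)`. -/
noncomputable def convFactor (μ : Measure ℝ) (m : ℕ) (z : ℝ) : ℝ :=
  (1 / moment μ m) * ∫ t, t ^ m / (t + z) ∂μ

/-- For a Stieltjes measure and a fixed `z > 0`, if the moment-ratio sequence
`μ_m/μ_{m+1}` converges to `ρ₀` and the converging factors `φ_m(z)` converge to `L`,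
then `ρ₀ ≥ 0` and `L = ρ₀/(1 + z ρ₀)`. -/
theorem stieltjes_convFactor_limit
    (μ : Measure ℝ) (hsupp : μ (Set.Iio 0) = 0) (hpos : 0 < μ (Set.Ioi 0))
    (hint : ∀ m : ℕ, Integrable (fun t => t ^ m) μ)
    (z : ℝ) (hz : 0 < z) (ρ₀ L : ℝ)
    (hρ : Filter.Tendsto (fun m : ℕ => moment μ m / moment μ (m + 1))
      Filter.atTop (nhds ρ₀))
    (hL : Filter.Tendsto (fun m : ℕ => convFactor μ m z) Filter.atTop (nhds L)) :
    0 ≤ ρ₀ ∧ L = ρ₀ / (1 + z * ρ₀) := by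
  have hae : ∀ᵐ t ∂μ, 0 ≤ t := by
    rw [ae_iff]
    convert hsupp using 2
    ext t
    simp [not_le]
  -- positivity of moments
  have mpos : ∀ m, 0 < moment μ m := by
    intro m
    rw [moment, integral_pos_iff_support_of_nonneg_ae
      (by filter_upwards [hae] with t ht; positivity) (hint m)]
    refine lt_of_lt_of_le hpos (measure_mono ?_)
    intro t ht
    simp only [Function.mem_support]
    exact pow_ne_zero m (ne_of_gt ht)
  -- integrability of t^m/(t+z)
  have intg : ∀ m, Integrable (fun t => t ^ m / (t + z)) μ := by
    intro m
    refine ((hint m).const_mul (1 / z)).mono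
      (((measurable_id.pow_const m).div (measurable_id.add_const z)).aestronglyMeasurable) ?_
    filter_upwards [hae] with t ht
    have h1 : (0:ℝ) < t + z := by linarith
    have h2 : t ^ m / (t + z) ≤ t ^ m / z := by
      apply div_le_div_of_nonneg_left (by positivity) hz (by linarith)
    rw [Real.norm_eq_abs, Real.norm_eq_abs, abs_of_nonneg (by positivity),
      abs_of_nonneg (by positivity)]
    calc t ^ m / (t + z) ≤ t ^ m / z := h2
      _ = 1 / z * t ^ m := by ring
  -- key identity
  have key : ∀ m, ∫ t, t ^ (m + 1) / (t + z) ∂μ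
      = moment μ m - z * ∫ t, t ^ m / (t + z) ∂μ := by
    intro m
    have h1 : ∫ t, t ^ (m + 1) / (t + z) ∂μ
        = ∫ t, (t ^ m - z * (t ^ m / (t + z))) ∂μ := by
      refine integral_congr_ae ?_
      filter_upwards [hae] with t ht
      have h1 : t + z ≠ 0 := by positivity
      field_simp
      ring
    rw [h1, integral_sub (hint m) ((intg m).const_mul z), moment,
      MeasureTheory.integral_const_mul]
  -- recursion for convFactor
  have hrec : ∀ m, convFactor μ (m + 1) z
      = (moment μ m / moment μ (m + 1)) * (1 - z * convFactor μ m z) := by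
    intro m
    have hm := (mpos m).ne'
    have hm1 := (mpos (m + 1)).ne'
    unfold convFactor
    rw [key m]
    field_simp
  have hρ0 : 0 ≤ ρ₀ :=
    ge_of_tendsto' hρ (fun m => div_nonneg (mpos m).le (mpos (m + 1)).le)
  have h1 : Filter.Tendsto (fun m : ℕ => convFactor μ (m + 1) z)
      Filter.atTop (nhds L) := hL.comp (Filter.tendsto_add_atTop_nat 1)
  have h2 : Filter.Tendsto
      (fun m : ℕ => (moment μ m / moment μ (m + 1)) * (1 - z * convFactor μ m z))
      Filter.atTop (nhds (ρ₀ * (1 - z * L))) :=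
    hρ.mul (tendsto_const_nhds.sub (tendsto_const_nhds.mul hL))
  have hEq : L = ρ₀ * (1 - z * L) := by
    refine tendsto_nhds_unique ?_ h2
    simpa only [hrec] using h1
  refine ⟨hρ0, ?_⟩
  have hne : (1 + z * ρ₀) ≠ 0 := by positivity
  rw [eq_div_iff hne]
  linear_combination hEq
end

section
/- Let F ∈ ℝ, let s : ℕ → ℝ be a sequence, and set a_{n+1} = s_{n+1} − s_n; assume a_{n+1} ≠ 0 for all n. Suppose there exist N ∈ ℕ and real numbers c_0, …, c_N such that F = s_n + a_{n+1} · Σ_{k=0}^{N} k! c_k/(n+1)_{k+1} for every n ∈ ℕ (finite inverse factorial series representation of the converging factor). Then for every n ∈ ℕ such that D_n := Σ_{j=0}^{N+1} (−1)^j binom(N+1, j) (n+j+1)_{N+1}/a_{n+j+1} ≠ 0, the (N,n) Weniger delta transform recovers F exactly: F = [Σ_{j=0}^{N+1} (−1)^j binom(N+1, j) (n+j+1)_{N+1} s_{n+j}/a_{n+j+1}] / D_n. -/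
open Finset fwdDiff

noncomputable def poch (x : ℝ) (j : ℕ) : ℝ := ∏ i ∈ Finset.range j, (x + i)

lemma poch_pos {x : ℝ} (hx : 0 < x) (j : ℕ) : 0 < poch x j := by
  apply Finset.prod_pos
  intro i _
  positivity

lemma poch_add (x : ℝ) (a b : ℕ) : poch x (a + b) = poch x a * poch (x + a) b := by
  unfold poch
  rw [Finset.prod_range_add]
  congr 1
  apply Finset.prod_congr rfl
  intro i _
  push_cast
  ring

lemma poch_succ_sub (x : ℝ) (e : ℕ) :
    poch (x + 1) (e + 1) - poch x (e + 1) = ((e : ℝ) + 1) * poch (x + 1) e := by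
  have h1 : poch (x + 1) (e + 1) = poch (x + 1) e * (x + 1 + e) := by
    unfold poch; rw [Finset.prod_range_succ]
  have h2 : poch x (e + 1) = x * poch (x + 1) e := by
    unfold poch
    rw [Finset.prod_range_succ']
    simp only [Nat.cast_zero, add_zero]
    rw [mul_comm]
    congr 1
    apply Finset.prod_congr rfl
    intro i _
    push_cast
    ring
  rw [h1, h2]; ring

lemma iter_fwdDiff_zero (m : ℕ) : (Δ_[(1:ℝ)])^[m] (fun _ : ℝ ↦ (0:ℝ)) = fun _ ↦ 0 := by
  induction m with
  | zero => rfl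
  | succ m ih =>
    rw [Function.iterate_succ_apply]
    have : Δ_[(1:ℝ)] (fun _ : ℝ ↦ (0:ℝ)) = fun _ ↦ 0 := by
      funext y; simp [fwdDiff]
    rw [this, ih]

lemma diff_iter_poch_zero : ∀ m d, d < m → ∀ t : ℝ,
    (Δ_[(1:ℝ)])^[m] (fun y : ℝ ↦ poch (y + t) d) = fun _ ↦ 0 := by
  intro m
  induction m with
  | zero => intro d hd; omega
  | succ m ih =>
    intro d hd t
    match d with
    | 0 =>
      rw [Function.iterate_succ_apply]
      have : Δ_[(1:ℝ)] (fun y : ℝ ↦ poch (y + t) 0) = fun _ ↦ 0 := by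
        funext y; simp [fwdDiff, poch]
      rw [this, iter_fwdDiff_zero]
    | e + 1 =>
      rw [Function.iterate_succ_apply]
      have h1 : Δ_[(1:ℝ)] (fun y : ℝ ↦ poch (y + t) (e + 1))
          = ((e : ℝ) + 1) • fun y : ℝ ↦ poch (y + (t + 1)) e := by
        funext y
        simp only [fwdDiff, Pi.smul_apply, smul_eq_mul]
        have e1 : y + 1 + t = (y + t) + 1 := by ring
        have e2 : y + (t + 1) = (y + t) + 1 := by ring
        rw [e1, e2, poch_succ_sub]
      rw [h1, fwdDiff_iter_const_smul, ih e (by omega) (t + 1)]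
      funext y; simp

lemma alt_sum_poch (N d : ℕ) (hd : d ≤ N) (t : ℝ) :
    ∑ j ∈ Finset.range (N + 2), (-1 : ℝ) ^ j * (Nat.choose (N + 1) j : ℝ) * poch (t + j) d
      = 0 := by
  have h0 := congrFun (diff_iter_poch_zero (N + 1) d (by omega) t) 0
  rw [fwdDiff_iter_eq_sum_shift] at h0
  have key : ∀ j ∈ Finset.range (N + 2),
      (-1 : ℝ) ^ j * (Nat.choose (N + 1) j : ℝ) * poch (t + j) d
        = (-1 : ℝ) ^ (N + 1) *
          (((-1 : ℤ) ^ (N + 1 - j) * (Nat.choose (N + 1) j : ℤ)) •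
            poch ((0 : ℝ) + j • (1 : ℝ) + t) d) := by
    intro j hj
    have hj' : j ≤ N + 1 := by simpa using Nat.lt_succ_iff.mp (Finset.mem_range.mp hj)
    have hsgn : (-1 : ℝ) ^ (N + 1) * (-1 : ℝ) ^ (N + 1 - j) = (-1 : ℝ) ^ j := by
      have h2 : (N + 1) + (N + 1 - j) = 2 * (N + 1 - j) + j := by omega
      rw [← pow_add, h2, pow_add, pow_mul]
      simp
    have harg : (0 : ℝ) + j • (1 : ℝ) + t = t + j := by
      simp [nsmul_eq_mul]; ring
    rw [harg]
    push_cast [zsmul_eq_mul]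
    rw [← hsgn]
    ring
  rw [Finset.sum_congr rfl key, ← Finset.mul_sum, h0, mul_zero]

/-- If `F = s_n + a_{n+1} Σ_{k=0}^{N} k! c_k/(n+1)_{k+1}` for every `n`, where
`a_{n+1} = s_{n+1} − s_n ≠ 0` (a finite inverse factorial series representation of the
converging factor), then the `(N,n)` Weniger delta transform recovers `F` exactly
whenever its denominator does not vanish. -/
theorem weniger_exact_on_finite_factorial_series
    (F : ℝ) (s : ℕ → ℝ) (ha : ∀ n : ℕ, s (n + 1) - s n ≠ 0)
    (N : ℕ) (c : ℕ → ℝ)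
    (hrep : ∀ n : ℕ, F = s n + (s (n + 1) - s n) *
      ∑ k ∈ Finset.range (N + 1),
        (Nat.factorial k : ℝ) * c k / poch ((n : ℝ) + 1) (k + 1)) :
    ∀ n : ℕ,
      (∑ j ∈ Finset.range (N + 2),
        (-1 : ℝ) ^ j * (Nat.choose (N + 1) j : ℝ) *
          (poch ((n : ℝ) + j + 1) (N + 1) / (s (n + j + 1) - s (n + j)))) ≠ 0 →
      F = (∑ j ∈ Finset.range (N + 2),
            (-1 : ℝ) ^ j * (Nat.choose (N + 1) j : ℝ) *
              (poch ((n : ℝ) + j + 1) (N + 1) * s (n + j) / (s (n + j + 1) - s (n + j))))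
          / (∑ j ∈ Finset.range (N + 2),
            (-1 : ℝ) ^ j * (Nat.choose (N + 1) j : ℝ) *
              (poch ((n : ℝ) + j + 1) (N + 1) / (s (n + j + 1) - s (n + j)))) := by
  intro n hden
  rw [eq_div_iff hden, ← sub_eq_zero, Finset.mul_sum, ← Finset.sum_sub_distrib]
  have hterm : ∀ j ∈ Finset.range (N + 2),
      F * ((-1 : ℝ) ^ j * (Nat.choose (N + 1) j : ℝ) *
            (poch ((n : ℝ) + j + 1) (N + 1) / (s (n + j + 1) - s (n + j))))
        - (-1 : ℝ) ^ j * (Nat.choose (N + 1) j : ℝ) *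
            (poch ((n : ℝ) + j + 1) (N + 1) * s (n + j) / (s (n + j + 1) - s (n + j)))
      = ∑ k ∈ Finset.range (N + 1),
          ((Nat.factorial k : ℝ) * c k) *
            ((-1 : ℝ) ^ j * (Nat.choose (N + 1) j : ℝ) *
              poch (((n : ℝ) + k + 2) + j) (N - k)) := by
    intro j hj
    have haj : s (n + j + 1) - s (n + j) ≠ 0 := ha (n + j)
    have hFr := hrep (n + j)
    push_cast at hFr
    have key : F - s (n + j) = (s (n + j + 1) - s (n + j)) *
        ∑ k ∈ Finset.range (N + 1),
          (Nat.factorial k : ℝ) * c k / poch ((n : ℝ) + j + 1) (k + 1) := by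
      rw [hFr]; ring
    have step1 : F * ((-1 : ℝ) ^ j * (Nat.choose (N + 1) j : ℝ) *
            (poch ((n : ℝ) + j + 1) (N + 1) / (s (n + j + 1) - s (n + j))))
        - (-1 : ℝ) ^ j * (Nat.choose (N + 1) j : ℝ) *
            (poch ((n : ℝ) + j + 1) (N + 1) * s (n + j) / (s (n + j + 1) - s (n + j)))
      = (-1 : ℝ) ^ j * (Nat.choose (N + 1) j : ℝ) *
          (poch ((n : ℝ) + j + 1) (N + 1) *
            ∑ k ∈ Finset.range (N + 1),
              (Nat.factorial k : ℝ) * c k / poch ((n : ℝ) + j + 1) (k + 1)) := by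
      have : F * ((-1 : ℝ) ^ j * (Nat.choose (N + 1) j : ℝ) *
            (poch ((n : ℝ) + j + 1) (N + 1) / (s (n + j + 1) - s (n + j))))
        - (-1 : ℝ) ^ j * (Nat.choose (N + 1) j : ℝ) *
            (poch ((n : ℝ) + j + 1) (N + 1) * s (n + j) / (s (n + j + 1) - s (n + j)))
        = (-1 : ℝ) ^ j * (Nat.choose (N + 1) j : ℝ) *
          (poch ((n : ℝ) + j + 1) (N + 1) * ((F - s (n + j)) / (s (n + j + 1) - s (n + j)))) := by
        ring
      rw [this, key]
      field_simp
    rw [step1, Finset.mul_sum, Finset.mul_sum]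
    apply Finset.sum_congr rfl
    intro k hk
    have hk' : k ≤ N := Nat.lt_succ_iff.mp (Finset.mem_range.mp hk)
    have hsplit : poch ((n : ℝ) + j + 1) (N + 1)
        = poch ((n : ℝ) + j + 1) (k + 1) * poch (((n : ℝ) + k + 2) + j) (N - k) := by
      have hnk : N + 1 = (k + 1) + (N - k) := by omega
      rw [hnk, poch_add]
      congr 2
      push_cast
      ring
    have hp0 : poch ((n : ℝ) + j + 1) (k + 1) ≠ 0 := by
      have : (0:ℝ) < (n : ℝ) + j + 1 := by positivity
      exact ne_of_gt (poch_pos this (k + 1))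
    rw [hsplit]
    field_simp
  rw [Finset.sum_congr rfl hterm, Finset.sum_comm]
  apply Finset.sum_eq_zero
  intro k hk
  have hk' : k ≤ N := Nat.lt_succ_iff.mp (Finset.mem_range.mp hk)
  rw [← Finset.mul_sum, alt_sum_poch N (N - k) (by omega) ((n : ℝ) + k + 2), mul_zero]
end

section
/- For every real z > 0, the Stieltjes function with moments Γ(m+1/2) is expressed through the complementary error function: ∫_0^∞ e^{−t}/(√t (t+z)) dt = (2√π e^{z}/√z) ∫_{√z}^{∞} e^{−u²} du. -/
open MeasureTheory Real Set

lemma image_lemma {z : ℝ} (hz : 0 < z) :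
    (fun x => Real.sqrt (z + z * x)) '' Set.Ioi 0 = Set.Ioi (Real.sqrt z) := by
  ext y
  constructor
  · rintro ⟨x, hx, rfl⟩
    exact Real.sqrt_lt_sqrt hz.le (by nlinarith [Set.mem_Ioi.mp hx])
  · intro hy
    have h0 : Real.sqrt z < y := hy
    have hy0 : 0 < y := lt_of_le_of_lt (Real.sqrt_nonneg z) h0
    have hzy : z < y ^ 2 := by nlinarith [Real.sq_sqrt hz.le, Real.sqrt_nonneg z]
    refine ⟨y ^ 2 / z - 1, ?_, ?_⟩
    · simp only [Set.mem_Ioi, sub_pos, lt_div_iff₀ hz]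
      linarith
    · have h : z + z * (y ^ 2 / z - 1) = y ^ 2 := by field_simp; ring
      show Real.sqrt (z + z * (y ^ 2 / z - 1)) = y
      rw [h, Real.sqrt_sq hy0.le]

lemma erfc_eq {z : ℝ} (hz : 0 < z) :
    ∫ u in Set.Ioi (Real.sqrt z), Real.exp (-u ^ 2)
      = (Real.exp (-z) * Real.sqrt z / 2) *
          ∫ x in Set.Ioi (0:ℝ), Real.exp (-(z * x)) / Real.sqrt (1 + x) := by
  rw [← image_lemma hz,
    integral_image_eq_integral_abs_deriv_smul measurableSet_Ioi
      (f' := fun x => z / (2 * Real.sqrt (z + z * x)))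
      (fun x hx => by
        have hxp : 0 < x := hx
        have hpos : 0 < z + z * x := by nlinarith
        have h1 : HasDerivAt (fun x : ℝ => z + z * x) z x := by
          simpa using ((hasDerivAt_id x).const_mul z).const_add z
        have h2 := (Real.hasDerivAt_sqrt hpos.ne').comp x h1
        have : (1 / (2 * Real.sqrt (z + z * x))) * z = z / (2 * Real.sqrt (z + z * x)) := by
          ring
        exact (this ▸ h2).hasDerivWithinAt)
      (fun a ha b hb hab => by
        have hap : (0:ℝ) < a := ha
        have hbp : (0:ℝ) < b := hb
        have h1 : z + z * a = z + z * b := by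
          have h := congrArg (fun y => y ^ 2) hab
          simpa [Real.sq_sqrt (by nlinarith : (0:ℝ) ≤ z + z * a),
            Real.sq_sqrt (by nlinarith : (0:ℝ) ≤ z + z * b)] using h
        nlinarith)]
  rw [← integral_const_mul]
  apply setIntegral_congr_fun measurableSet_Ioi
  intro x hx
  have hxp : 0 < x := hx
  have hpos : 0 < z + z * x := by nlinarith
  have hsq : Real.sqrt (z + z * x) ^ 2 = z + z * x := Real.sq_sqrt hpos.le
  have hsplit : Real.sqrt (z + z * x) = Real.sqrt z * Real.sqrt (1 + x) := by
    rw [← Real.sqrt_mul hz.le]; ring_nf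
  have h1x : (0:ℝ) < Real.sqrt (1 + x) := Real.sqrt_pos.mpr (by linarith)
  have hzz : (0:ℝ) < Real.sqrt z := Real.sqrt_pos.mpr hz
  show |z / (2 * Real.sqrt (z + z * x))| • Real.exp (-Real.sqrt (z + z * x) ^ 2)
      = Real.exp (-z) * Real.sqrt z / 2 * (Real.exp (-(z * x)) / Real.sqrt (1 + x))
  rw [smul_eq_mul, hsq, abs_of_pos (by positivity),
    show -(z + z * x) = -z + -(z * x) by ring, Real.exp_add, hsplit]
  set A := Real.exp (-z) with hA
  set B := Real.exp (-(z * x)) with hB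
  field_simp
  linear_combination (-(A * B)) * Real.mul_self_sqrt hz.le


lemma inner_x {z : ℝ} (hz : 0 < z) {t : ℝ} (ht : 0 < t) :
    ∫ x in Set.Ioi (0:ℝ),
        Real.exp (-(z * x)) * (t ^ (-(1/2) : ℝ) * Real.exp (-((1 + x) * t)))
      = Real.exp (-t) / (Real.sqrt t * (t + z)) := by
  have hcongr : ∀ x : ℝ,
      Real.exp (-(z * x)) * (t ^ (-(1/2) : ℝ) * Real.exp (-((1 + x) * t)))
        = (t ^ (-(1/2) : ℝ) * Real.exp (-t)) * Real.exp (-((t + z) * x)) := by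
    intro x
    rw [mul_left_comm, ← Real.exp_add, mul_assoc, ← Real.exp_add]
    ring_nf
  simp_rw [hcongr]
  rw [MeasureTheory.integral_const_mul]
  have h1 : ∫ x in Set.Ioi (0:ℝ), Real.exp (-((t + z) * x)) = 1 / (t + z) := by
    have := Real.integral_rpow_mul_exp_neg_mul_Ioi (one_pos) (by positivity : 0 < t + z)
    simpa using this
  rw [h1]
  rw [Real.rpow_neg ht.le, ← Real.sqrt_eq_rpow]
  field_simp

lemma inner_t {z : ℝ} {x : ℝ} (hx : 0 < x) :
    ∫ t in Set.Ioi (0:ℝ),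
        Real.exp (-(z * x)) * (t ^ (-(1/2) : ℝ) * Real.exp (-((1 + x) * t)))
      = Real.sqrt π * (Real.exp (-(z * x)) / Real.sqrt (1 + x)) := by
  rw [MeasureTheory.integral_const_mul]
  have h1 : ∫ t in Set.Ioi (0:ℝ), t ^ (-(1/2) : ℝ) * Real.exp (-((1 + x) * t))
      = (1 / (1 + x)) ^ ((1:ℝ)/2) * Real.Gamma (1/2) := by
    have := Real.integral_rpow_mul_exp_neg_mul_Ioi
      (by norm_num : (0:ℝ) < 1/2) (by linarith : 0 < 1 + x)
    rw [← this]
    apply setIntegral_congr_fun measurableSet_Ioi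
    intro t ht
    norm_num
  rw [h1, Real.Gamma_one_half_eq, ← Real.sqrt_eq_rpow, Real.sqrt_div' 1 (by linarith)]
  have h2 : (0:ℝ) < Real.sqrt (1 + x) := Real.sqrt_pos.mpr (by linarith)
  rw [Real.sqrt_one]
  field_simp


lemma g_factor {z t x : ℝ} :
    Real.exp (-(z * x)) * (t ^ (-(1/2) : ℝ) * Real.exp (-((1 + x) * t)))
      = (t ^ (-(1/2) : ℝ) * Real.exp (-t)) * Real.exp (-((t + z) * x)) := by
  rw [mul_left_comm, ← Real.exp_add, mul_assoc, ← Real.exp_add]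
  ring_nf



lemma fubini_side {z : ℝ} (hz : 0 < z) :
    ∫ t in Set.Ioi (0:ℝ), Real.exp (-t) / (Real.sqrt t * (t + z))
      = Real.sqrt π * ∫ x in Set.Ioi (0:ℝ), Real.exp (-(z * x)) / Real.sqrt (1 + x) := by
  set g : ℝ → ℝ → ℝ := fun t x =>
    Real.exp (-(z * x)) * (t ^ (-(1/2) : ℝ) * Real.exp (-((1 + x) * t))) with hgdef
  have hmeas : Measurable (Function.uncurry g) := by
    unfold Function.uncurry; fun_prop
  have hgnn : ∀ t x : ℝ, 0 ≤ t → 0 ≤ g t x := fun t x ht =>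
    mul_nonneg (Real.exp_pos _).le
      (mul_nonneg (Real.rpow_nonneg ht _) (Real.exp_pos _).le)
  -- t-side a.e. identity
  have hF : ∀ᵐ t ∂(volume.restrict (Set.Ioi (0:ℝ))),
      ENNReal.ofReal (Real.exp (-t) / (Real.sqrt t * (t + z)))
        = ∫⁻ x in Set.Ioi (0:ℝ), ENNReal.ofReal (g t x) := by
    filter_upwards [ae_restrict_mem measurableSet_Ioi] with t ht
    have ht' : (0:ℝ) < t := ht
    have hint : IntegrableOn (fun x => g t x) (Set.Ioi (0:ℝ)) := by
      have base : IntegrableOn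
          (fun x : ℝ => (t ^ (-(1/2) : ℝ) * Real.exp (-t)) * Real.exp (-(t + z) * x))
          (Set.Ioi (0:ℝ)) :=
        (exp_neg_integrableOn_Ioi 0 (by linarith : (0:ℝ) < t + z)).const_mul _
      exact base.congr_fun (fun x hx => by beta_reduce; rw [neg_mul, ← g_factor]) measurableSet_Ioi
    rw [← inner_x hz ht,
      ofReal_integral_eq_lintegral_ofReal hint
        ((ae_restrict_mem measurableSet_Ioi).mono fun x hx => hgnn t x (le_of_lt ht))]
  -- x-side a.e. identity
  have hG : ∀ᵐ x ∂(volume.restrict (Set.Ioi (0:ℝ))),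
      ENNReal.ofReal (Real.sqrt π * (Real.exp (-(z * x)) / Real.sqrt (1 + x)))
        = ∫⁻ t in Set.Ioi (0:ℝ), ENNReal.ofReal (g t x) := by
    filter_upwards [ae_restrict_mem measurableSet_Ioi] with x hx
    have hint : IntegrableOn (fun t => g t x) (Set.Ioi (0:ℝ)) := by
      have base : IntegrableOn
          (fun t : ℝ => t ^ (-(1/2) : ℝ) * Real.exp (-(1 + x) * t ^ (1:ℝ)))
          (Set.Ioi (0:ℝ)) :=
        integrableOn_rpow_mul_exp_neg_mul_rpow (by norm_num) one_pos
          (by linarith [Set.mem_Ioi.mp hx] : (0:ℝ) < 1 + x)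
      have base' : IntegrableOn
          (fun t : ℝ => Real.exp (-(z * x)) * (t ^ (-(1/2) : ℝ) * Real.exp (-(1 + x) * t ^ (1:ℝ))))
          (Set.Ioi (0:ℝ)) := base.const_mul _
      exact base'.congr_fun
        (fun t ht => by beta_reduce; rw [Real.rpow_one, neg_mul]) measurableSet_Ioi
    rw [← inner_t (Set.mem_Ioi.mp hx),
      ofReal_integral_eq_lintegral_ofReal hint
        ((ae_restrict_mem measurableSet_Ioi).mono fun t ht =>
          hgnn t x (le_of_lt (Set.mem_Ioi.mp ht)))]
  -- integrability of the G side
  have hHint : IntegrableOn (fun x : ℝ => Real.exp (-(z * x)) / Real.sqrt (1 + x))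
      (Set.Ioi (0:ℝ)) := by
    have h0 : IntegrableOn (fun x : ℝ => Real.exp (-z * x)) (Set.Ioi (0:ℝ)) :=
      exp_neg_integrableOn_Ioi 0 hz
    refine MeasureTheory.Integrable.mono h0 ((by fun_prop : Measurable fun x : ℝ =>
      Real.exp (-(z * x)) / Real.sqrt (1 + x)).aestronglyMeasurable) ?_
    filter_upwards [ae_restrict_mem measurableSet_Ioi] with x hx
    have hx0 : (0:ℝ) < x := hx
    have hs1 : (1:ℝ) ≤ Real.sqrt (1 + x) := by
      nlinarith [Real.sq_sqrt (by linarith : (0:ℝ) ≤ 1 + x), Real.sqrt_nonneg (1 + x)]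
    rw [Real.norm_eq_abs, Real.norm_eq_abs, abs_of_nonneg
        (div_nonneg (Real.exp_pos _).le (Real.sqrt_nonneg _)),
      abs_of_nonneg (Real.exp_pos _).le, neg_mul]
    exact div_le_self (Real.exp_pos _).le hs1
  have hGint : IntegrableOn
      (fun x : ℝ => Real.sqrt π * (Real.exp (-(z * x)) / Real.sqrt (1 + x)))
      (Set.Ioi (0:ℝ)) := hHint.const_mul _
  have hGnn : 0 ≤ᵐ[volume.restrict (Set.Ioi (0:ℝ))]
      fun x : ℝ => Real.sqrt π * (Real.exp (-(z * x)) / Real.sqrt (1 + x)) :=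
    Filter.Eventually.of_forall fun x =>
      mul_nonneg (Real.sqrt_nonneg _)
        (div_nonneg (Real.exp_pos _).le (Real.sqrt_nonneg _))
  have hFnn : 0 ≤ᵐ[volume.restrict (Set.Ioi (0:ℝ))]
      fun t : ℝ => Real.exp (-t) / (Real.sqrt t * (t + z)) := by
    filter_upwards [ae_restrict_mem measurableSet_Ioi] with t ht
    have : (0:ℝ) < t := ht
    exact div_nonneg (Real.exp_pos _).le
      (mul_nonneg (Real.sqrt_nonneg _) (by linarith))
  have hFmeas : AEStronglyMeasurable
      (fun t : ℝ => Real.exp (-t) / (Real.sqrt t * (t + z)))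
      (volume.restrict (Set.Ioi (0:ℝ))) := by
    apply Measurable.aestronglyMeasurable; fun_prop
  calc ∫ t in Set.Ioi (0:ℝ), Real.exp (-t) / (Real.sqrt t * (t + z))
      = (∫⁻ t in Set.Ioi (0:ℝ),
          ENNReal.ofReal (Real.exp (-t) / (Real.sqrt t * (t + z)))).toReal :=
        integral_eq_lintegral_of_nonneg_ae hFnn hFmeas
    _ = (∫⁻ x in Set.Ioi (0:ℝ),
          ENNReal.ofReal (Real.sqrt π * (Real.exp (-(z * x)) / Real.sqrt (1 + x)))).toReal := by
        have hm : Measurable (Function.uncurry fun t x => ENNReal.ofReal (g t x)) :=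
          ENNReal.measurable_ofReal.comp hmeas
        have hswap : (∫⁻ t in Set.Ioi (0:ℝ), ∫⁻ x in Set.Ioi (0:ℝ), ENNReal.ofReal (g t x))
            = ∫⁻ x in Set.Ioi (0:ℝ), ∫⁻ t in Set.Ioi (0:ℝ), ENNReal.ofReal (g t x) :=
          lintegral_lintegral_swap hm.aemeasurable
        rw [lintegral_congr_ae hF, hswap, ← lintegral_congr_ae hG]
    _ = ∫ x in Set.Ioi (0:ℝ), Real.sqrt π * (Real.exp (-(z * x)) / Real.sqrt (1 + x)) := by
        rw [← ofReal_integral_eq_lintegral_ofReal hGint hGnn,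
          ENNReal.toReal_ofReal (integral_nonneg_of_ae hGnn)]
    _ = Real.sqrt π * ∫ x in Set.Ioi (0:ℝ), Real.exp (-(z * x)) / Real.sqrt (1 + x) := by
        rw [MeasureTheory.integral_const_mul]

/-- For every real `z > 0`, the Stieltjes function with moments `Γ(m+1/2)` is expressed
through the complementary error function:
`∫_0^∞ e^{−t}/(√t (t+z)) dt = (2√π e^{z}/√z) ∫_{√z}^{∞} e^{−u²} du`. -/
theorem stieltjes_function_erfc (z : ℝ) (hz : 0 < z) :
    ∫ t in Set.Ioi (0 : ℝ), Real.exp (-t) / (Real.sqrt t * (t + z))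
      = (2 * Real.sqrt π * Real.exp z / Real.sqrt z) *
          ∫ u in Set.Ioi (Real.sqrt z), Real.exp (-u ^ 2) := by
  rw [fubini_side hz, erfc_eq hz]
  have h1 : Real.sqrt z ≠ 0 := (Real.sqrt_pos.mpr hz).ne'
  have h2 : Real.exp z ≠ 0 := (Real.exp_pos z).ne'
  rw [Real.exp_neg]
  field_simp
end

section
/- (Landau's convergence criterion for factorial series.) Let z > 0 be real and let b : ℕ → ℝ. Then the factorial series Σ_{n=0}^{∞} b_n · n!/(z)_{n+1} converges if and only if the associated Dirichlet series Σ_{n=1}^{∞} b_n · n^{−z} converges. -/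
open Filter Finset Real

private lemma poch_pos_s19 {z : ℝ} (hz : 0 < z) (j : ℕ) : 0 < poch z j :=
  Finset.prod_pos fun i _ => by positivity

/-- Abel's test, monotone version. -/
private lemma abel_mono {f g : ℕ → ℝ} {c : ℝ} (hf : Monotone f)
    (hc : Filter.Tendsto f Filter.atTop (nhds c))
    (hg : CauchySeq fun n => ∑ i ∈ Finset.range n, g i) :
    CauchySeq fun n => ∑ i ∈ Finset.range n, f i * g i := by
  obtain ⟨R, -, hR⟩ := cauchySeq_bdd hg
  have hb : ∀ n, ‖∑ i ∈ Finset.range n, g i‖ ≤ R := fun n => by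
    have := (hR n 0).le
    simpa [Real.dist_eq, Real.norm_eq_abs] using this
  have h1 : Monotone fun n => f n - c := fun a b hab => by
    have := hf hab; simpa using this
  have h0 : Filter.Tendsto (fun n => f n - c) Filter.atTop (nhds 0) := by
    simpa using hc.sub_const c
  have hD := h1.cauchySeq_series_mul_of_tendsto_zero_of_bounded h0 hb
  have hC : CauchySeq fun n => c * ∑ i ∈ Finset.range n, g i :=
    Real.uniformContinuous_const_mul.comp_cauchySeq hg
  have hsum := hD.add hC
  have heq : (fun n => ∑ i ∈ Finset.range n, f i * g i)
      = (fun n => (∑ i ∈ Finset.range n, (f i - c) • g i)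
          + c * ∑ i ∈ Finset.range n, g i) := by
    funext n
    rw [Finset.mul_sum, ← Finset.sum_add_distrib]
    exact Finset.sum_congr rfl fun i _ => by simp [smul_eq_mul]; ring
  rw [heq]
  exact hsum

/-- Abel's test, antitone version. -/
private lemma abel_anti {f g : ℕ → ℝ} {c : ℝ} (hf : Antitone f)
    (hc : Filter.Tendsto f Filter.atTop (nhds c))
    (hg : CauchySeq fun n => ∑ i ∈ Finset.range n, g i) :
    CauchySeq fun n => ∑ i ∈ Finset.range n, f i * g i := by
  have h := abel_mono (f := fun n => -f n) (c := -c)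
    (fun a b hab => neg_le_neg (hf hab)) hc.neg hg
  have h2 := h.neg
  have heq : (fun n => ∑ i ∈ Finset.range n, f i * g i)
      = -fun n => ∑ i ∈ Finset.range n, (fun n => -f n) i * g i := by
    funext n
    simp [neg_mul, Finset.sum_neg_distrib]
  rw [heq]
  exact h2

/-- The comparison sequence `t n = n^z · n! / (z)_{n+1}`, adjusted at `n = 0`
so that `t 0 = t 1`. -/
noncomputable def landauT (z : ℝ) (n : ℕ) : ℝ :=
  if n = 0 then 1 / (z * (z + 1))
  else (n : ℝ) ^ z * (Nat.factorial n) / poch z (n + 1)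

private lemma landauT_eq_gammaSeq {z : ℝ} {n : ℕ} (hn : n ≠ 0) :
    landauT z n = Real.GammaSeq z n := by
  rw [landauT, if_neg hn, Real.GammaSeq, poch]

private lemma landauT_pos {z : ℝ} (hz : 0 < z) (n : ℕ) : 0 < landauT z n := by
  rcases eq_or_ne n 0 with h | h
  · rw [landauT, if_pos h]; positivity
  · rw [landauT, if_neg h]
    have hn : 0 < (n : ℝ) := by
      exact_mod_cast Nat.pos_of_ne_zero h
    have := poch_pos_s19 hz (n + 1)
    have : (0:ℝ) < (n : ℝ) ^ z := Real.rpow_pos_of_pos hn z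
    positivity

private lemma landauT_tendsto {z : ℝ} :
    Filter.Tendsto (landauT z) Filter.atTop (nhds (Real.Gamma z)) := by
  apply (Real.GammaSeq_tendsto_Gamma z).congr'
  filter_upwards [Filter.eventually_ge_atTop 1] with n hn
  exact (landauT_eq_gammaSeq (by omega)).symm

private lemma key_ineq {z : ℝ} (hz : 0 < z) {a : ℝ} (ha : 1 ≤ a) :
    a ^ z * (z + a + 1) ≤ (a + 1) ^ z * (a + 1) := by
  have ha0 : 0 < a := lt_of_lt_of_le one_pos ha
  have ha1 : (0:ℝ) < a + 1 := by linarith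
  -- exp (1/(a+1)) ≤ (a+1)/a
  have h1 : Real.exp (1 / (a + 1)) ≤ (a + 1) / a := by
    have := Real.add_one_le_exp (-(1 / (a + 1)))
    have hE : 0 < Real.exp (1 / (a + 1)) := Real.exp_pos _
    rw [Real.exp_neg] at this
    rw [le_div_iff₀ ha0]
    have h2 : (-(1 / (a + 1)) + 1) * Real.exp (1 / (a + 1)) ≤ 1 := by
      calc (-(1 / (a + 1)) + 1) * Real.exp (1 / (a + 1))
          ≤ (Real.exp (1 / (a + 1)))⁻¹ * Real.exp (1 / (a + 1)) :=
            mul_le_mul_of_nonneg_right this hE.le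
        _ = 1 := inv_mul_cancel₀ hE.ne'
    have h3 : -(1 / (a + 1)) + 1 = a / (a + 1) := by field_simp; ring
    rw [h3] at h2
    calc Real.exp (1 / (a + 1)) * a
        = (a / (a + 1) * Real.exp (1 / (a + 1))) * (a + 1) := by field_simp
      _ ≤ 1 * (a + 1) := mul_le_mul_of_nonneg_right h2 ha1.le
      _ = a + 1 := one_mul _
  -- 1 + z/(a+1) ≤ ((a+1)/a)^z
  have h4 : 1 + z / (a + 1) ≤ ((a + 1) / a) ^ z := by
    have h5 : z / (a + 1) + 1 ≤ Real.exp (z / (a + 1)) := Real.add_one_le_exp _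
    have h6 : Real.exp (z / (a + 1)) = Real.exp (1 / (a + 1)) ^ z := by
      rw [Real.rpow_def_of_pos (Real.exp_pos _), Real.log_exp]
      ring_nf
    have h7 : Real.exp (1 / (a + 1)) ^ z ≤ ((a + 1) / a) ^ z :=
      Real.rpow_le_rpow (Real.exp_pos _).le h1 hz.le
    linarith [h5, h6 ▸ h5, h7, h6.symm.le.trans (le_refl _)]
  -- multiply by (a+1)
  have h8 : z + a + 1 ≤ ((a + 1) / a) ^ z * (a + 1) := by
    have := mul_le_mul_of_nonneg_right h4 ha1.le
    calc z + a + 1 = (1 + z / (a + 1)) * (a + 1) := by field_simp; ring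
      _ ≤ ((a + 1) / a) ^ z * (a + 1) := this
  have h9 : ((a + 1) / a) ^ z = (a + 1) ^ z / a ^ z := Real.div_rpow ha1.le ha0.le z
  have haz : 0 < a ^ z := Real.rpow_pos_of_pos ha0 z
  calc a ^ z * (z + a + 1) ≤ a ^ z * (((a + 1) / a) ^ z * (a + 1)) :=
        mul_le_mul_of_nonneg_left h8 haz.le
    _ = (a + 1) ^ z * (a + 1) := by rw [h9]; field_simp

private lemma landauT_mono {z : ℝ} (hz : 0 < z) : Monotone (landauT z) := by
  apply monotone_nat_of_le_succ
  intro n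
  rcases Nat.eq_zero_or_pos n with h | h
  · subst h
    have : poch z 2 = z * (z + 1) := by
      simp [poch, Finset.prod_range_succ]
    show landauT z 0 ≤ landauT z 1
    simp [landauT, this, Real.one_rpow]
  · have hn : n ≠ 0 := h.ne'
    rw [landauT, landauT, if_neg hn, if_neg (Nat.succ_ne_zero n)]
    have hP : poch z (n + 1 + 1) = poch z (n + 1) * (z + (n + 1)) := by
      simp [poch, Finset.prod_range_succ]
    have hPpos := poch_pos_s19 hz (n + 1)
    have hPpos2 := poch_pos_s19 hz (n + 1 + 1)
    rw [div_le_div_iff₀ hPpos hPpos2, hP]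
    have hfac : (Nat.factorial (n + 1) : ℝ) = (Nat.factorial n : ℝ) * (n + 1) := by
      rw [Nat.factorial_succ]; push_cast; ring
    have ha : (1:ℝ) ≤ (n : ℝ) := by exact_mod_cast h
    have hk := key_ineq hz ha
    have hfacpos : (0:ℝ) < (Nat.factorial n : ℝ) := by
      exact_mod_cast Nat.factorial_pos n
    have hcast : ((n + 1 : ℕ) : ℝ) = (n : ℝ) + 1 := by push_cast; ring
    rw [hcast, hfac]
    calc (n:ℝ) ^ z * ↑n.factorial * (poch z (n + 1) * (z + ((n:ℝ) + 1)))
        = ((n:ℝ) ^ z * (z + (n:ℝ) + 1)) * (↑n.factorial * poch z (n + 1)) := by ring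
      _ ≤ (((n:ℝ) + 1) ^ z * ((n:ℝ) + 1)) * (↑n.factorial * poch z (n + 1)) := by
          apply mul_le_mul_of_nonneg_right hk
          positivity
      _ = ((n:ℝ) + 1) ^ z * (↑n.factorial * ((n:ℝ) + 1)) * poch z (n + 1) := by ring

/-- Landau's convergence criterion for factorial series: for real `z > 0`, the
factorial series `Σ_{n=0}^{∞} b_n n!/(z)_{n+1}` converges (i.e. its partial sums have
a limit) if and only if the associated Dirichlet series `Σ_{n=1}^{∞} b_n n^{−z}`
converges. -/
theorem landau_factorial_series_criterion (z : ℝ) (hz : 0 < z) (b : ℕ → ℝ) :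
    (∃ L : ℝ, Filter.Tendsto
        (fun N : ℕ => ∑ n ∈ Finset.range N,
          b n * (Nat.factorial n : ℝ) / poch z (n + 1))
        Filter.atTop (nhds L))
    ↔ (∃ L : ℝ, Filter.Tendsto
        (fun N : ℕ => ∑ n ∈ Finset.Icc 1 N, b n * (n : ℝ) ^ (-z))
        Filter.atTop (nhds L)) := by
  set t : ℕ → ℝ := landauT z with ht
  set X : ℕ → ℝ := fun n => if n = 0 then b 0 * (z + 1) else b n * (n : ℝ) ^ (-z) with hX
  have hGamma : 0 < Real.Gamma z := Real.Gamma_pos_of_pos hz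
  have htpos : ∀ n, 0 < t n := landauT_pos hz
  -- term identity
  have hTX : ∀ n, t n * X n = b n * (Nat.factorial n : ℝ) / poch z (n + 1) := by
    intro n
    rcases eq_or_ne n 0 with h | h
    · subst h
      have hpoch1 : poch z 1 = z := by simp [poch]
      simp only [ht, hX, landauT, if_pos rfl, ↓reduceIte, hpoch1, Nat.factorial_zero]
      have hz1 : z + 1 ≠ 0 := by positivity
      field_simp
      ring
    · have hn : (0:ℝ) < (n : ℝ) := by exact_mod_cast Nat.pos_of_ne_zero h
      have hrz : (0:ℝ) < (n : ℝ) ^ z := Real.rpow_pos_of_pos hn z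
      have hPp := poch_pos_s19 hz (n + 1)
      simp only [ht, hX, landauT, if_neg h]
      rw [Real.rpow_neg hn.le]
      field_simp
  -- partial-sum identities
  have hfun : (fun N : ℕ => ∑ n ∈ Finset.range N,
      b n * (Nat.factorial n : ℝ) / poch z (n + 1))
      = fun N => ∑ n ∈ Finset.range N, t n * X n :=
    funext fun N => Finset.sum_congr rfl fun n _ => (hTX n).symm
  have hsum : ∀ N : ℕ, ∑ n ∈ Finset.range (N + 1), X n
      = X 0 + ∑ n ∈ Finset.Icc 1 N, b n * (n : ℝ) ^ (-z) := by
    intro N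
    induction N with
    | zero => simp
    | succ N ih =>
      rw [Finset.sum_range_succ, ih,
        Finset.sum_Icc_succ_top (Nat.succ_le_succ (Nat.zero_le N))]
      have : X (N + 1) = b (N + 1) * ((N + 1 : ℕ) : ℝ) ^ (-z) := by
        simp only [hX, if_neg (Nat.succ_ne_zero N)]
      rw [this]
      ring
  constructor
  · -- factorial series converges → Dirichlet series converges
    rintro ⟨L, hL⟩
    rw [hfun] at hL
    have hcauchy : CauchySeq fun N => ∑ n ∈ Finset.range N, t n * X n := hL.cauchySeq
    -- Abel with 1/t
    have hanti : Antitone fun n => (t n)⁻¹ := fun a b hab =>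
      inv_anti₀ (htpos a) (landauT_mono hz hab)
    have hinvlim : Filter.Tendsto (fun n => (t n)⁻¹) Filter.atTop
        (nhds (Real.Gamma z)⁻¹) := (landauT_tendsto (z := z)).inv₀ hGamma.ne'
    have hC := abel_anti hanti hinvlim hcauchy
    have heq : (fun n => ∑ i ∈ Finset.range n, (t i)⁻¹ * (t i * X i))
        = fun n => ∑ i ∈ Finset.range n, X i := by
      funext n
      exact Finset.sum_congr rfl fun i _ => by
        rw [← mul_assoc, inv_mul_cancel₀ (htpos i).ne', one_mul]
    rw [heq] at hC
    obtain ⟨M, hM⟩ := cauchySeq_tendsto_of_complete hC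
    refine ⟨M - X 0, ?_⟩
    have h1 : Filter.Tendsto (fun N => ∑ n ∈ Finset.range (N + 1), X n)
        Filter.atTop (nhds M) := (Filter.tendsto_add_atTop_iff_nat 1).mpr hM
    have h2 := h1.sub_const (X 0)
    apply h2.congr
    intro N
    rw [hsum N]
    ring
  · -- Dirichlet series converges → factorial series converges
    rintro ⟨L, hL⟩
    have h1 : Filter.Tendsto (fun N => ∑ n ∈ Finset.range (N + 1), X n)
        Filter.atTop (nhds (X 0 + L)) := by
      apply (tendsto_const_nhds.add hL).congr
      intro N
      exact (hsum N).symm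
    have h2 : Filter.Tendsto (fun N => ∑ n ∈ Finset.range N, X n)
        Filter.atTop (nhds (X 0 + L)) := (Filter.tendsto_add_atTop_iff_nat 1).mp h1
    have hcauchy : CauchySeq fun N => ∑ n ∈ Finset.range N, X n := h2.cauchySeq
    have hC := abel_mono (landauT_mono hz) (landauT_tendsto (z := z)) hcauchy
    rw [← ht] at hC
    obtain ⟨M, hM⟩ := cauchySeq_tendsto_of_complete hC
    refine ⟨M, ?_⟩
    rw [hfun]
    exact hM
end
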